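/- Let 1 ≤ n, m ≤ N−1 with n ≠ m. The Gelfand–Zetlin raising operator E_{n,n+1} and lowering operator E_{m+1,m} commute: for every function f : ℂ^Γ → ℂ and every point γ with γ_{kj} − γ_{ks} ∉ iℏ·ℤ for all k and all j ≠ s, one has (E_{n,n+1}(E_{m+1,m} f))(γ) = (E_{m+1,m}(E_{n,n+1} f))(γ). -/
import Mathlib


noncomputable section

open Finset

/-- A point of the Gelfand–Zetlin variable space: an assignment of a complex
number to each index pair `(n, j)` (with `γ (N, j)` playing the role of the
fixed top-level parameters). -/
abbrev Pt : Type := ℕ × ℕ → ℂ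

/-- Operators acting on functions of the Gelfand–Zetlin variables. -/
abbrev Op : Type := (Pt → ℂ) → (Pt → ℂ)

/-- Shift the coordinate `γ (n, j)` by `c`. -/
def shift (n j : ℕ) (c : ℂ) (γ : Pt) : Pt :=
  fun p => if p = (n, j) then γ p + c else γ p

/-- The diagonal Gelfand–Zetlin operator `E_{nn}`. -/
def Ediag (hb : ℂ) (n : ℕ) : Op := fun f γ =>
  (1 / (Complex.I * hb)) *
    ((∑ j ∈ Finset.Icc 1 n, γ (n, j)) - ∑ j ∈ Finset.Icc 1 (n - 1), γ (n - 1, j)) * f γ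

/-- The raising Gelfand–Zetlin operator `E_{n,n+1}`. -/
def Eraise (hb : ℂ) (n : ℕ) : Op := fun f γ =>
  -(1 / (Complex.I * hb)) * ∑ j ∈ Finset.Icc 1 n,
    ((∏ r ∈ Finset.Icc 1 (n + 1), (γ (n, j) - γ (n + 1, r) - Complex.I * hb / 2)) /
        ∏ s ∈ (Finset.Icc 1 n).erase j, (γ (n, j) - γ (n, s))) *
      f (shift n j (-(Complex.I * hb)) γ)

/-- The lowering Gelfand–Zetlin operator `E_{n+1,n}`. -/
def Elower (hb : ℂ) (n : ℕ) : Op := fun f γ =>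
  (1 / (Complex.I * hb)) * ∑ j ∈ Finset.Icc 1 n,
    ((∏ r ∈ Finset.Icc 1 (n - 1), (γ (n, j) - γ (n - 1, r) + Complex.I * hb / 2)) /
        ∏ s ∈ (Finset.Icc 1 n).erase j, (γ (n, j) - γ (n, s))) *
      f (shift n j (Complex.I * hb) γ)

/-- Genericity: `γ (m, j) - γ (m, s) ∉ ihb·ℤ` for all levels `m ≤ N` and all `j ≠ s`. -/
def Generic (N : ℕ) (hb : ℂ) (γ : Pt) : Prop :=
  ∀ m j s, 1 ≤ m → m ≤ N → 1 ≤ j → j ≤ m → 1 ≤ s → s ≤ m → j ≠ s →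
    ∀ k : ℤ, γ (m, j) - γ (m, s) ≠ Complex.I * hb * (k : ℂ)

lemma pair_ne_of_fst {a b c d : ℕ} (h : a ≠ c) : ((a, b) : ℕ × ℕ) ≠ (c, d) :=
  fun he => h (congrArg Prod.fst he)

lemma pair_ne_of_snd {a b c d : ℕ} (h : b ≠ d) : ((a, b) : ℕ × ℕ) ≠ (c, d) :=
  fun he => h (congrArg Prod.snd he)

lemma shift_same (n j : ℕ) (c : ℂ) (γ : Pt) : shift n j c γ (n, j) = γ (n, j) + c := by
  simp [shift]

lemma shift_other {p : ℕ × ℕ} (n j : ℕ) (c : ℂ) (γ : Pt) (hp : p ≠ (n, j)) :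
    shift n j c γ p = γ p := by
  simp [shift, hp]

lemma shift_comm (n j m k : ℕ) (c d : ℂ) (γ : Pt) (hne : (n, j) ≠ ((m, k) : ℕ × ℕ)) :
    shift n j c (shift m k d γ) = shift m k d (shift n j c γ) := by
  funext p
  by_cases h1 : p = (n, j)
  · subst h1
    rw [show shift n j c (shift m k d γ) (n, j) = shift m k d γ (n, j) + c from if_pos rfl,
      shift_other m k d γ hne, shift_other m k d _ hne,
      show shift n j c γ (n, j) = γ (n, j) + c from if_pos rfl]
  · by_cases h2 : p = (m, k)
    · subst h2
      rw [shift_other n j c _ h1, show shift m k d γ (m, k) = γ (m, k) + d from if_pos rfl,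
        show shift m k d (shift n j c γ) (m, k) = shift n j c γ (m, k) + d from if_pos rfl,
        shift_other n j c γ h1]
    · rw [shift_other n j c _ h1, shift_other m k d γ h2,
        shift_other m k d _ h2, shift_other n j c γ h1]

/-- `[E_{n,n+1}, E_{m+1,m}] = 0` for `n ≠ m`, pointwise at generic points. -/
theorem gz_raise_lower_commute (N : ℕ) (hN : 2 ≤ N) (hb : ℂ) (hhb : hb ≠ 0)
    (n m : ℕ) (hn1 : 1 ≤ n) (hn2 : n ≤ N - 1) (hm1 : 1 ≤ m) (hm2 : m ≤ N - 1)
    (hnm : n ≠ m)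
    (f : Pt → ℂ) (γ : Pt) (hγ : Generic N hb γ) :
    Eraise hb n (Elower hb m f) γ = Elower hb m (Eraise hb n f) γ := by
  classical
  simp only [Eraise, Elower, Finset.mul_sum]
  rw [Finset.sum_comm (s := Finset.Icc 1 m)]
  refine Finset.sum_congr rfl fun j hj => Finset.sum_congr rfl fun k hk => ?_
  have hmn : m ≠ n := Ne.symm hnm
  have hnejm : ((n, j) : ℕ × ℕ) ≠ (m, k) := pair_ne_of_fst hnm
  have hnemj : ((m, k) : ℕ × ℕ) ≠ (n, j) := pair_ne_of_fst hmn
  rw [shift_comm n j m k _ _ γ hnejm]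
  rw [shift_other n j (-(Complex.I * hb)) γ hnemj,
      shift_other m k (Complex.I * hb) γ hnejm]
  have eDB : (∏ s ∈ (Finset.Icc 1 m).erase k,
        (γ (m, k) - shift n j (-(Complex.I * hb)) γ (m, s)))
      = ∏ s ∈ (Finset.Icc 1 m).erase k, (γ (m, k) - γ (m, s)) :=
    Finset.prod_congr rfl fun s _ => by
      rw [shift_other n j _ γ (pair_ne_of_fst hmn)]
  have eDA : (∏ s ∈ (Finset.Icc 1 n).erase j,
        (γ (n, j) - shift m k (Complex.I * hb) γ (n, s)))
      = ∏ s ∈ (Finset.Icc 1 n).erase j, (γ (n, j) - γ (n, s)) :=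
    Finset.prod_congr rfl fun s _ => by
      rw [shift_other m k _ γ (pair_ne_of_fst hnm)]
  rw [eDB, eDA]
  by_cases hm : m = n + 1
  · subst hm
    simp only [Nat.add_sub_cancel]
    have hk' : k ∈ Finset.Icc 1 (n + 1) := hk
    have eNB1 : (∏ r ∈ Finset.Icc 1 n,
          (γ (n + 1, k) - shift n j (-(Complex.I * hb)) γ (n, r) + Complex.I * hb / 2))
        = (γ (n + 1, k) - (γ (n, j) + -(Complex.I * hb)) + Complex.I * hb / 2) *
            ∏ r ∈ (Finset.Icc 1 n).erase j, (γ (n + 1, k) - γ (n, r) + Complex.I * hb / 2) := by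
      rw [← Finset.mul_prod_erase _ _ hj, shift_same]
      exact congrArg _ (Finset.prod_congr rfl fun r hr => by
        rw [shift_other n j _ γ (pair_ne_of_snd (Finset.ne_of_mem_erase hr))])
    have eNB : (∏ r ∈ Finset.Icc 1 n, (γ (n + 1, k) - γ (n, r) + Complex.I * hb / 2))
        = (γ (n + 1, k) - γ (n, j) + Complex.I * hb / 2) *
            ∏ r ∈ (Finset.Icc 1 n).erase j, (γ (n + 1, k) - γ (n, r) + Complex.I * hb / 2) :=
      (Finset.mul_prod_erase _ _ hj).symm
    have eNA2 : (∏ r ∈ Finset.Icc 1 (n + 1),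
          (γ (n, j) - shift (n + 1) k (Complex.I * hb) γ (n + 1, r) - Complex.I * hb / 2))
        = (γ (n, j) - (γ (n + 1, k) + Complex.I * hb) - Complex.I * hb / 2) *
            ∏ r ∈ (Finset.Icc 1 (n + 1)).erase k,
              (γ (n, j) - γ (n + 1, r) - Complex.I * hb / 2) := by
      rw [← Finset.mul_prod_erase _ _ hk', shift_same]
      exact congrArg _ (Finset.prod_congr rfl fun r hr => by
        rw [shift_other (n + 1) k _ γ (pair_ne_of_snd (Finset.ne_of_mem_erase hr))])
    have eNA : (∏ r ∈ Finset.Icc 1 (n + 1), (γ (n, j) - γ (n + 1, r) - Complex.I * hb / 2))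
        = (γ (n, j) - γ (n + 1, k) - Complex.I * hb / 2) *
            ∏ r ∈ (Finset.Icc 1 (n + 1)).erase k,
              (γ (n, j) - γ (n + 1, r) - Complex.I * hb / 2) :=
      (Finset.mul_prod_erase _ _ hk').symm
    rw [eNB1, eNB, eNA2, eNA]
    ring
  · have hm1n : m - 1 ≠ n := by omega
    have eNB1 : (∏ r ∈ Finset.Icc 1 (m - 1),
          (γ (m, k) - shift n j (-(Complex.I * hb)) γ (m - 1, r) + Complex.I * hb / 2))
        = ∏ r ∈ Finset.Icc 1 (m - 1), (γ (m, k) - γ (m - 1, r) + Complex.I * hb / 2) :=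
      Finset.prod_congr rfl fun r _ => by
        rw [shift_other n j _ γ (pair_ne_of_fst hm1n)]
    have eNA2 : (∏ r ∈ Finset.Icc 1 (n + 1),
          (γ (n, j) - shift m k (Complex.I * hb) γ (n + 1, r) - Complex.I * hb / 2))
        = ∏ r ∈ Finset.Icc 1 (n + 1), (γ (n, j) - γ (n + 1, r) - Complex.I * hb / 2) :=
      Finset.prod_congr rfl fun r _ => by
        rw [shift_other m k _ γ (pair_ne_of_fst fun h => hm h.symm)]
    rw [eNB1, eNA2]
    ring
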